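/- arXiv:1009.1610 — 2 statements merged into one kernel-verified Lean document; each statement's English description precedes it below -/
import Mathlib

section
/- Let K be a field of characteristic zero with a primitive n-th root of unity ζ, n an odd positive integer, and let D_n denote the n-th Dickson polynomial of the first kind with parameter 1, characterized by D_n(x + 1/x) = xⁿ + 1/xⁿ. Then D_n(x₁) - D_n(x₂) = (x₁ - x₂)·∏_{i=1}^{(n-1)/2} (x₁² + x₂² - (ζ^i + ζ^{-i})x₁x₂ + (ζ^i - ζ^{-i})²) in K[x₁,x₂]. -/
/-!
Over an algebraically closed field every value is `u + u⁻¹` for some `u ≠ 0`, and there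
`Dₙ(u + u⁻¹) - Dₙ(v + v⁻¹) = u⁻ⁿ (uⁿ - vⁿ)(uⁿ - v⁻ⁿ) = ∏ᵢ (u + u⁻¹ - ζⁱv - ζ⁻ⁱv⁻¹)`.
For odd `n` the factor `i = 0` is `x₁ - x₂`, and the factors `i` and `n - i` multiply to the
quadratic `x₁² + x₂² - (ζⁱ + ζ⁻ⁱ)x₁x₂ + (ζⁱ - ζ⁻ⁱ)²`. Since the algebraic closure is infinite,
the identity of values gives the polynomial identity, first over the closure and then over `K`.
-/

open Finset

theorem Finset.prod_range_two_mul_add_one_eq_mul_prod_Icc {M : Type*} [CommMonoid M]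
    (f : ℕ → M) (m : ℕ) :
    ∏ i ∈ range (2 * m + 1), f i = f 0 * ∏ i ∈ Icc 1 m, (f i * f (2 * m + 1 - i)) := by
  rw [← Ico_add_one_right_eq_Icc, prod_Ico_eq_prod_range, add_tsub_cancel_right, prod_mul_distrib,
    prod_range_succ', two_mul, prod_range_add, ← prod_range_reflect (fun i => f (m + i + 1)) m,
    mul_comm]
  congr 2 <;> refine prod_congr rfl fun i hi => congrArg f ?_ <;> grind

theorem IsPrimitiveRoot.pow_sub_eq_inv_pow {M : Type*} [DivisionCommMonoid M] {ζ : M} {n i : ℕ}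
    (hζ : IsPrimitiveRoot ζ n) (hi : i ≤ n) : ζ ^ (n - i) = ζ⁻¹ ^ i := by
  rw [inv_pow]
  exact eq_inv_of_mul_eq_one_left (by rw [← pow_add, Nat.sub_add_cancel hi, hζ.pow_eq_one])

theorem sub_add_mul_sub_add_eq_of_mul_eq_one {R : Type*} [CommRing R] {a v v' w w' : R}
    (hv : v * v' = 1) (hw : w * w' = 1) :
    (a - (w * v + w' * v')) * (a - (w' * v + w * v'))
      = a ^ 2 + (v + v') ^ 2 - (w + w') * a * (v + v') + (w - w') ^ 2 := by
  linear_combination (v ^ 2 + v' ^ 2 + 2) * hw + (w ^ 2 + w' ^ 2 - 2) * hv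

section

open Polynomial

theorem IsPrimitiveRoot.pow_sub_pow_eq_prod_range {R : Type*} [CommRing R] [IsDomain R] {ζ : R}
    {n : ℕ} (hζ : IsPrimitiveRoot ζ n) (hn : 0 < n) (x y : R) :
    x ^ n - y ^ n = ∏ i ∈ range n, (x - ζ ^ i * y) := by
  simpa [eval_prod] using congr_arg (eval x) (X_pow_sub_C_eq_prod hζ hn (rfl : y ^ n = y ^ n))

theorem IsPrimitiveRoot.pow_add_inv_pow_sub_eq_prod {L : Type*} [Field L] {ζ : L} {n : ℕ}
    (hζ : IsPrimitiveRoot ζ n) (hn : 0 < n) {u v : L} (hu : u ≠ 0) (hv : v ≠ 0) :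
    u ^ n + u⁻¹ ^ n - (v ^ n + v⁻¹ ^ n)
      = ∏ i ∈ range n, (u + u⁻¹ - (ζ ^ i * v + ζ⁻¹ ^ i * v⁻¹)) := by
  have hζ0 : ζ ≠ 0 := hζ.ne_zero hn.ne'
  calc u ^ n + u⁻¹ ^ n - (v ^ n + v⁻¹ ^ n)
      = u⁻¹ ^ n * ((u ^ n - v ^ n) * (u ^ n - v⁻¹ ^ n)) := by
        simp only [inv_pow]; field_simp; ring
    _ = ∏ i ∈ range n, u⁻¹ * ((u - ζ ^ i * v) * (u - ζ⁻¹ ^ i * v⁻¹)) := by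
      rw [hζ.pow_sub_pow_eq_prod_range hn, hζ.inv.pow_sub_pow_eq_prod_range hn,
        prod_mul_distrib, prod_mul_distrib, prod_const, card_range]
    _ = _ := prod_congr rfl fun i _ => by simp only [inv_pow]; field_simp; ring

theorem IsPrimitiveRoot.pow_add_inv_pow_sub_eq_mul_prod {L : Type*} [Field L] {ζ : L} {n : ℕ}
    (hζ : IsPrimitiveRoot ζ n) (hodd : Odd n) {u v : L} (hu : u ≠ 0) (hv : v ≠ 0) :
    u ^ n + u⁻¹ ^ n - (v ^ n + v⁻¹ ^ n) = (u + u⁻¹ - (v + v⁻¹)) *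
      ∏ i ∈ Icc 1 ((n - 1) / 2), ((u + u⁻¹) ^ 2 + (v + v⁻¹) ^ 2
        - (ζ ^ i + ζ⁻¹ ^ i) * (u + u⁻¹) * (v + v⁻¹) + (ζ ^ i - ζ⁻¹ ^ i) ^ 2) := by
  obtain ⟨m, rfl⟩ := hodd
  have hζ0 : ζ ≠ 0 := hζ.ne_zero (by omega)
  rw [hζ.pow_add_inv_pow_sub_eq_prod (by omega) hu hv, prod_range_two_mul_add_one_eq_mul_prod_Icc,
    show (2 * m + 1 - 1) / 2 = m by omega]
  congr 1
  · simp
  · refine prod_congr rfl fun i hi => ?_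
    have hin : i ≤ 2 * m + 1 := by grind
    rw [hζ.pow_sub_eq_inv_pow hin, hζ.inv.pow_sub_eq_inv_pow hin, inv_inv]
    exact sub_add_mul_sub_add_eq_of_mul_eq_one (mul_inv_cancel₀ hv)
      (by rw [← mul_pow, mul_inv_cancel₀ hζ0, one_pow])

theorem IsAlgClosed.exists_add_inv_eq {L : Type*} [Field L] [IsAlgClosed L] (a : L) :
    ∃ u : L, u ≠ 0 ∧ u + u⁻¹ = a := by
  obtain ⟨u, hu⟩ := IsAlgClosed.exists_root (X ^ 2 - C a * X + 1 : L[X])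
    (by rw [show (X ^ 2 - C a * X + 1 : L[X]).degree = 2 by compute_degree!]; decide)
  have hu' : u ^ 2 - a * u + 1 = 0 := by simpa using hu
  have hu0 : u ≠ 0 := by rintro rfl; simp at hu'
  exact ⟨u, hu0, by field_simp; linear_combination hu'⟩

theorem IsPrimitiveRoot.dickson_one_one_eval_sub_eval_eq_mul_prod {L : Type*} [Field L]
    [IsAlgClosed L] {ζ : L} {n : ℕ} (hζ : IsPrimitiveRoot ζ n) (hodd : Odd n) (a b : L) :
    (dickson 1 (1 : L) n).eval a - (dickson 1 (1 : L) n).eval b = (a - b) *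
      ∏ i ∈ Icc 1 ((n - 1) / 2),
        (a ^ 2 + b ^ 2 - (ζ ^ i + ζ⁻¹ ^ i) * a * b + (ζ ^ i - ζ⁻¹ ^ i) ^ 2) := by
  obtain ⟨u, hu, rfl⟩ := IsAlgClosed.exists_add_inv_eq a
  obtain ⟨v, hv, rfl⟩ := IsAlgClosed.exists_add_inv_eq b
  rw [dickson_one_one_eval_add_inv _ _ (mul_inv_cancel₀ hu),
    dickson_one_one_eval_add_inv _ _ (mul_inv_cancel₀ hv)]
  exact hζ.pow_add_inv_pow_sub_eq_mul_prod hodd hu hv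

end

open MvPolynomial in
theorem stmt_6_general (K : Type*) [Field K] (n : ℕ) (hodd : Odd n)
    (ζ : K) (hζ : IsPrimitiveRoot ζ n) :
    Polynomial.aeval (X 0 : MvPolynomial (Fin 2) K) (Polynomial.dickson 1 (1 : K) n)
        - Polynomial.aeval (X 1 : MvPolynomial (Fin 2) K) (Polynomial.dickson 1 (1 : K) n)
      = (X 0 - X 1) *
          ∏ i ∈ Finset.Icc 1 ((n - 1) / 2),
            ((X 0) ^ 2 + (X 1) ^ 2 - C (ζ ^ i + ζ⁻¹ ^ i) * X 0 * X 1
              + C ((ζ ^ i - ζ⁻¹ ^ i) ^ 2)) := by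
  let φ := algebraMap K (AlgebraicClosure K)
  apply map_injective φ φ.injective
  refine MvPolynomial.funext fun x => ?_
  have hD : ∀ j, eval₂ φ x (Polynomial.aeval (X j) (Polynomial.dickson 1 (1 : K) n))
      = (Polynomial.dickson 1 1 n).eval (x j) := fun j => by
    rw [← aeval_def, ← Polynomial.aeval_algHom_apply, aeval_X, ← Polynomial.eval_map_algebraMap,
      Polynomial.map_dickson, map_one]
  simp only [map_sub, map_mul, map_prod, map_add, map_pow, map_inv₀, map_X, map_C, eval_map, hD,
    eval_X, eval_C]
  exact (hζ.map_of_injective φ.injective).dickson_one_one_eval_sub_eval_eq_mul_prod hodd (x 0) (x 1)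

open MvPolynomial in
theorem stmt_6 (K : Type*) [Field K] [CharZero K] (n : ℕ) (hodd : Odd n) (hn : 0 < n)
    (ζ : K) (hζ : IsPrimitiveRoot ζ n) :
    Polynomial.aeval (X 0 : MvPolynomial (Fin 2) K) (Polynomial.dickson 1 (1 : K) n)
        - Polynomial.aeval (X 1 : MvPolynomial (Fin 2) K) (Polynomial.dickson 1 (1 : K) n)
      = (X 0 - X 1) *
          ∏ i ∈ Finset.Icc 1 ((n - 1) / 2),
            ((X 0) ^ 2 + (X 1) ^ 2 - C (ζ ^ i + ζ⁻¹ ^ i) * X 0 * X 1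
              + C ((ζ ^ i - ζ⁻¹ ^ i) ^ 2)) :=
  stmt_6_general K n hodd ζ hζ
end

section
/- Let α satisfy α² + α + 2 = 0, with conjugate ᾱ = -1 - α, and let t be an indeterminate over ℚ(α). Let M be the 6×6 lower-triangular matrix over ℚ(α)[t] with rows: (α,0,0,0,0,0), (0,α,0,0,0,0), (-3(2α+1)t, 0, ᾱ, 0,0,0), (-4(α+4)t, -4(α+4)t, 0, α, 0,0), (35(α+2)t², -5(2α+1)t, -5(α-3)t, 0, ᾱ, 0), (-42(α-3)t², -21(2α-3)t², -6(α-3)t, -6(2α+1)t, 0, ᾱ). Then M·M^σ = 2·I₆, where M^σ is obtained by applying the conjugation α ↦ ᾱ to all entries. -/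
open Matrix

/-- The matrix `M` of the statement with `α, ᾱ, t` replaced by `a, b, t`, so that `M^σ` is
`matrixM b a t`. -/
def matrixM {R : Type*} [CommRing R] (a b t : R) : Matrix (Fin 6) (Fin 6) R :=
  !![a, 0, 0, 0, 0, 0;
     0, a, 0, 0, 0, 0;
     -3 * (2 * a + 1) * t, 0, b, 0, 0, 0;
     -4 * (a + 4) * t, -4 * (a + 4) * t, 0, a, 0, 0;
     35 * (a + 2) * t ^ 2, -5 * (2 * a + 1) * t, -5 * (a - 3) * t, 0, b, 0;
     -42 * (a - 3) * t ^ 2, -21 * (2 * a - 3) * t ^ 2, -6 * (a - 3) * t,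
       -6 * (2 * a + 1) * t, 0, b]

/-- Entrywise, `matrixM a b t * matrixM b a t - 2` lies in the ideal `(a + b + 1, a * b - 2)`
of `ℤ[a, b, t]`. -/
theorem matrixM_mul_matrixM {R : Type*} [CommRing R] {a b : R} (hsum : a + b = -1)
    (hprod : a * b = 2) (t : R) : matrixM a b t * matrixM b a t = 2 := by
  ext i j
  fin_cases i <;> fin_cases j <;>
    simp only [matrixM, mul_apply, Fin.sum_univ_six, of_apply, ofNat_apply, cons_val,
      Fin.isValue, Fin.reduceFinMk, cons_val_zero, cons_val_one, cons_val_two, cons_val_three,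
      cons_val_four, head_cons, tail_cons] <;>
    grind

open Polynomial in
theorem stmt_11_general (K : Type*) [Field K] (α : K) (hα : α ^ 2 + α + 2 = 0)
    (Mmat : K → K → Matrix (Fin 6) (Fin 6) (Polynomial K))
    (hMmat : ∀ a b, Mmat a b =
      !![C a, 0, 0, 0, 0, 0;
         0, C a, 0, 0, 0, 0;
         C (-3 * (2 * a + 1)) * X, 0, C b, 0, 0, 0;
         C (-4 * (a + 4)) * X, C (-4 * (a + 4)) * X, 0, C a, 0, 0;
         C (35 * (a + 2)) * X ^ 2, C (-5 * (2 * a + 1)) * X, C (-5 * (a - 3)) * X, 0, C b, 0;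
         C (-42 * (a - 3)) * X ^ 2, C (-21 * (2 * a - 3)) * X ^ 2, C (-6 * (a - 3)) * X,
           C (-6 * (2 * a + 1)) * X, 0, C b]) :
    Mmat α (-1 - α) * Mmat (-1 - α) α = (2 : Matrix (Fin 6) (Fin 6) (Polynomial K)) := by
  have hM : ∀ a b, Mmat a b = matrixM (C a) (C b) X := by
    intro a b
    simp only [hMmat, matrixM, map_mul, map_add, map_sub, map_neg, map_ofNat, map_one]
  rw [hM, hM]
  apply matrixM_mul_matrixM
  · rw [← map_add, add_sub_cancel, map_neg, map_one]
  · rw [← map_mul, show α * (-1 - α) = 2 by linear_combination -hα, map_ofNat]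

open Polynomial in
theorem stmt_11 (K : Type*) [Field K] [CharZero K] (α : K) (hα : α ^ 2 + α + 2 = 0)
    (Mmat : K → K → Matrix (Fin 6) (Fin 6) (Polynomial K))
    (hMmat : ∀ a b, Mmat a b =
      !![C a, 0, 0, 0, 0, 0;
         0, C a, 0, 0, 0, 0;
         C (-3 * (2 * a + 1)) * X, 0, C b, 0, 0, 0;
         C (-4 * (a + 4)) * X, C (-4 * (a + 4)) * X, 0, C a, 0, 0;
         C (35 * (a + 2)) * X ^ 2, C (-5 * (2 * a + 1)) * X, C (-5 * (a - 3)) * X, 0, C b, 0;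
         C (-42 * (a - 3)) * X ^ 2, C (-21 * (2 * a - 3)) * X ^ 2, C (-6 * (a - 3)) * X,
           C (-6 * (2 * a + 1)) * X, 0, C b]) :
    Mmat α (-1 - α) * Mmat (-1 - α) α = (2 : Matrix (Fin 6) (Fin 6) (Polynomial K)) :=
  stmt_11_general K α hα Mmat hMmat
end
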